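/- Let V and W be cyclically reduced words of lengths n and m, let c be an integer with 0 ≤ c < n and c < m, and let (i,j) ∈ I(V,W) be a pair such that: v_{i−1−t} = bar w_{j+t} for all integers t with 0 ≤ t < c; v_{i−1−c} ≠ bar w_{j+c}; v_i ≠ w_j; and v_i ≠ bar w_{j−1} (so (i,j) is extremal and c is the negative length of its class). Then the word v_i v_{i+1} … v_{i−1−c} w_{j+c} w_{j+c+1} … w_{j−1} is cyclically reduced, has length n + m − 2c, and its image in FreeGroup S is conjugate to the image of the concatenation V_i W_j. -/
import Mathlib


namespace GoldmanPaper

variable {α : Type*} [Inhabited α]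

/-- The letter of `V` at index `i`, indices taken modulo the length of `V`. -/
def letterZ (V : List α) (i : ZMod V.length) : α := V.getD i.val default

/-- The cyclic rotation `V_i` for an index `i` mod the length of `V`. -/
def rotZ (V : List α) (i : ZMod V.length) : List α := V.rotate i.val

/-- The cyclic rotation `V_j` for an integer `j` (taken mod the length of `V`). -/
def rot (V : List α) (j : ℤ) : List α := V.rotate ((j % (V.length : ℤ)).toNat)

/-- `V^k`: the concatenation of `k` copies of `V`. -/
def wpow (V : List α) (k : ℕ) : List α := (List.replicate k V).flatten

/-- A word is primitive if it is not of the form `W^r` with `r ≥ 2`. -/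
def Primitive (V : List α) : Prop := ¬ ∃ (W : List α) (r : ℕ), 2 ≤ r ∧ V = wpow W r

/-- `V` is freely reduced: `v_{i+1} ≠ bar v_i` for all `i`. -/
def FreelyReduced (bar : α → α) (V : List α) : Prop :=
  ∀ i : ℕ, i + 1 < V.length → V.getD (i + 1) default ≠ bar (V.getD i default)

/-- `V` is cyclically reduced: nonempty, freely reduced, and `v_0 ≠ bar v_{n-1}`. -/
def CyclicallyReduced (bar : α → α) (V : List α) : Prop :=
  V ≠ [] ∧ FreelyReduced bar V ∧ V.getD 0 default ≠ bar (V.getD (V.length - 1) default)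

/-- The generating step of the equivalence relation `R(V,W)` on `I(V,W)`:
rule 1 relates `(j,k)` with `(j+1,k+1)` whenever `v_j = w_k`; rule 2 relates
`(j+1,k)` with `(j,k+1)` whenever `v_j = bar w_k`. -/
def Step (bar : α → α) (V W : List α) :
    ZMod V.length × ZMod W.length → ZMod V.length × ZMod W.length → Prop :=
  fun p q =>
    (q = (p.1 + 1, p.2 + 1) ∧ letterZ V p.1 = letterZ W p.2) ∨
    (q = (p.1 - 1, p.2 + 1) ∧ letterZ V (p.1 - 1) = bar (letterZ W p.2))

/-- The equivalence relation `R(V,W)` generated by rules 1 and 2. -/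
def REq (bar : α → α) (V W : List α) :
    ZMod V.length × ZMod W.length → ZMod V.length × ZMod W.length → Prop :=
  Relation.EqvGen (Step bar V W)

/-- A pair `(i,j) ∈ I(V,W)` is extremal if `v_i ≠ w_j` and `v_i ≠ bar w_{j-1}`. -/
def Extremal (bar : α → α) (V W : List α) (p : ZMod V.length × ZMod W.length) : Prop :=
  letterZ V p.1 ≠ letterZ W p.2 ∧ letterZ V p.1 ≠ bar (letterZ W (p.2 - 1))

section Order

variable [LinearOrder α]

/-- The order on `α` cyclically rotated so that `x` is the smallest element. -/
def cycLT (x a b : α) : Prop :=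
  if (x ≤ a ∧ x ≤ b) ∨ (a < x ∧ b < x) then a < b else x ≤ a ∧ b < x

/-- The order on half-infinite words. -/
def hwLT (bar : α → α) (T U : ℕ → α) : Prop :=
  T 0 < U 0 ∨ ∃ j : ℕ, (∀ i ≤ j, T i = U i) ∧ cycLT (bar (T j)) (T (j + 1)) (U (j + 1))

/-- A 4-tuple is linearly ordered: strictly increasing or strictly decreasing. -/
def LinOrd4 {β : Type*} (lt : β → β → Prop) (a b c d : β) : Prop :=
  (lt a b ∧ lt b c ∧ lt c d) ∨ (lt d c ∧ lt c b ∧ lt b a)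

/-- A 4-tuple is cyclically ordered: some cyclic permutation is linearly ordered. -/
def CycOrd4 {β : Type*} (lt : β → β → Prop) (a b c d : β) : Prop :=
  LinOrd4 lt a b c d ∨ LinOrd4 lt b c d a ∨ LinOrd4 lt c d a b ∨ LinOrd4 lt d a b c

/-- The half-infinite word `V_i^∞`. -/
def fwd (V : List α) (i : ZMod V.length) : ℕ → α :=
  fun t => letterZ V (i + (t : ZMod V.length))

/-- The half-infinite word `V_i^{-∞} = (bar V_i)^∞`. -/
def bwd (bar : α → α) (V : List α) (i : ZMod V.length) : ℕ → α :=
  fun t => bar (letterZ V (i - 1 - (t : ZMod V.length)))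

open scoped Classical in
/-- The sign `s_{V,W}(i,j) ∈ {-1,0,1}`. -/
noncomputable def sgn (bar : α → α) (V W : List α)
    (i : ZMod V.length) (j : ZMod W.length) : ℤ :=
  if CycOrd4 (hwLT bar) (fwd V i) (fwd W j) (bwd bar V i) (bwd bar W j) then 1
  else if CycOrd4 (hwLT bar) (fwd V i) (bwd bar W j) (bwd bar V i) (fwd W j) then -1
  else 0

end Order

/-- The involution `bar` on the alphabet `S × Bool`. -/
def pbar {S : Type*} : S × Bool → S × Bool := fun p => (p.1, !p.2)


section Statement8Aux
variable {β : Type*} [Inhabited β]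

lemma pbar_pbar {S : Type*} (x : S × Bool) : pbar (pbar x) = x := by simp [pbar]

lemma val_add_cast {n : ℕ} [NeZero n] (i : ZMod n) (s : ℕ) :
    (i + (s : ZMod n)).val = (i.val + s) % n := by
  rw [ZMod.val_add, ZMod.val_natCast]
  conv_rhs => rw [Nat.add_mod, Nat.mod_eq_of_lt (ZMod.val_lt i)]

lemma letterZ_succ_ne (bar : β → β) {V : List β} (hV : CyclicallyReduced bar V)
    (k : ZMod V.length) : letterZ V (k + 1) ≠ bar (letterZ V k) := by
  obtain ⟨hne, hfr, hwrap⟩ := hV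
  haveI : NeZero V.length := ⟨by simpa using hne⟩
  have h1 : (k + 1).val = (k.val + 1) % V.length := by
    have := val_add_cast k 1; simpa using this
  by_cases h : k.val + 1 < V.length
  · rw [Nat.mod_eq_of_lt h] at h1
    simpa [letterZ, h1] using hfr k.val h
  · have hk : k.val = V.length - 1 := by have := ZMod.val_lt k; omega
    have h0 : (k + 1).val = 0 := by
      rw [h1, hk]; have := V.length_pos_of_ne_nil hne
      rw [Nat.sub_add_cancel (by omega), Nat.mod_self]
    simpa [letterZ, h0, hk] using hwrap

lemma rotZ_eq_ofFn (V : List β) [NeZero V.length] (i : ZMod V.length) :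
    rotZ V i = List.ofFn (fun t : Fin V.length => letterZ V (i + ((t : ℕ) : ZMod V.length))) := by
  have hn : 0 < V.length := Nat.pos_of_ne_zero (NeZero.ne _)
  apply List.ext_getElem
  · simp [rotZ]
  · intro s hs1 hs2
    rw [show (rotZ V i)[s]'hs1 = (V.rotate i.val)[s]'(by simpa [rotZ] using hs1) from rfl,
      List.getElem_rotate, List.getElem_ofFn]
    show _ = letterZ V (i + ((s : ℕ) : ZMod V.length))
    rw [letterZ, List.getD_eq_getElem _ _ (by rw [val_add_cast]; exact Nat.mod_lt _ hn)]
    congr 1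
    rw [val_add_cast, Nat.add_comm]

end Statement8Aux

/-- cancelling the negative length `c` from `V_i W_j` produces a cyclically
reduced word of length `n + m - 2c` conjugate to `V_i W_j`. -/
theorem statement8 {S : Type*} [Inhabited S] (V W : List (S × Bool))
    (hV : CyclicallyReduced pbar V) (hW : CyclicallyReduced pbar W)
    (c : ℕ) (hcV : c < V.length) (hcW : c < W.length)
    (i : ZMod V.length) (j : ZMod W.length)
    (hneg : ∀ t : ℕ, t < c →
      letterZ V (i - 1 - (t : ZMod V.length)) = pbar (letterZ W (j + (t : ZMod W.length))))
    (hstop : letterZ V (i - 1 - (c : ZMod V.length)) ≠ pbar (letterZ W (j + (c : ZMod W.length))))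
    (hx1 : letterZ V i ≠ letterZ W j)
    (hx2 : letterZ V i ≠ pbar (letterZ W (j - 1))) :
    ∀ U : List (S × Bool),
      U = (List.ofFn fun t : Fin (V.length - c) => letterZ V (i + ((t : ℕ) : ZMod V.length))) ++
          (List.ofFn fun t : Fin (W.length - c) =>
            letterZ W (j + (c : ZMod W.length) + ((t : ℕ) : ZMod W.length))) →
      CyclicallyReduced pbar U ∧ U.length = V.length + W.length - 2 * c ∧
      IsConj (FreeGroup.mk U) (FreeGroup.mk (rotZ V i ++ rotZ W j)) := by
  intro U hU
  haveI : NeZero V.length := ⟨by omega⟩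
  haveI : NeZero W.length := ⟨by omega⟩
  set A := (List.ofFn fun t : Fin (V.length - c) => letterZ V (i + ((t : ℕ) : ZMod V.length)))
    with hA
  set B := (List.ofFn fun t : Fin (W.length - c) =>
      letterZ W (j + (c : ZMod W.length) + ((t : ℕ) : ZMod W.length))) with hB
  subst hU
  have hlA : A.length = V.length - c := by simp [hA]
  have hlB : B.length = W.length - c := by simp [hB]
  have hlenU : (A ++ B).length = (V.length - c) + (W.length - c) := by
    simp [hlA, hlB]
  have hget1 : ∀ s, (hs : s < V.length - c) →
      (A ++ B).getD s default = letterZ V (i + ((s : ℕ) : ZMod V.length)) := by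
    intro s hs
    rw [List.getD_eq_getElem _ _ (by omega), List.getElem_append]
    rw [dif_pos (by omega)]
    simp [hA]
  have hget2 : ∀ s, (hs1 : V.length - c ≤ s) → (hs2 : s < (V.length - c) + (W.length - c)) →
      (A ++ B).getD s default =
        letterZ W (j + (c : ZMod W.length) + ((s - (V.length - c) : ℕ) : ZMod W.length)) := by
    intro s hs1 hs2
    rw [List.getD_eq_getElem _ _ (by omega), List.getElem_append]
    rw [dif_neg (by omega)]
    simp [hB, hlA]
  refine ⟨⟨?_, ?_, ?_⟩, ?_, ?_⟩
  · -- nonempty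
    intro h
    have := congrArg List.length h
    rw [hlenU] at this
    simp at this
    omega
  · -- freely reduced
    intro t ht
    rw [hlenU] at ht
    rcases lt_trichotomy (t + 1) (V.length - c) with h1 | h1 | h1
    · rw [hget1 (t + 1) h1, hget1 t (by omega)]
      have : ((t + 1 : ℕ) : ZMod V.length) = ((t : ℕ) : ZMod V.length) + 1 := by push_cast; ring
      rw [this, ← add_assoc]
      exact letterZ_succ_ne pbar hV _
    · rw [hget1 t (by omega), hget2 (t + 1) (by omega) (by omega)]
      have e0 : t + 1 - (V.length - c) = 0 := by omega
      have e1 : ((t : ℕ) : ZMod V.length) = -((c : ZMod V.length) + 1) := by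
        rw [show t = V.length - (c + 1) from by omega, Nat.cast_sub (by omega)]
        push_cast [ZMod.natCast_self]
        ring
      rw [e0, e1, show i + -((c : ZMod V.length) + 1) = i - 1 - (c : ZMod V.length) from by ring]
      intro heq
      rw [Nat.cast_zero, add_zero] at heq
      exact hstop (by rw [heq, pbar_pbar])
    · rw [hget2 t (by omega) (by omega), hget2 (t + 1) (by omega) (by omega)]
      have : ((t + 1 - (V.length - c) : ℕ) : ZMod W.length) =
          ((t - (V.length - c) : ℕ) : ZMod W.length) + 1 := by
        rw [show t + 1 - (V.length - c) = (t - (V.length - c)) + 1 from by omega]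
        push_cast; ring
      rw [this, ← add_assoc]
      exact letterZ_succ_ne pbar hW _
  · -- wrap
    rw [hlenU, show (V.length - c) + (W.length - c) - 1 = ((V.length - c) + (W.length - c)) - 1
      from rfl]
    rw [hget1 0 (by omega), hget2 _ (by omega) (by omega)]
    have e1 : ((V.length - c) + (W.length - c) - 1 - (V.length - c) : ℕ) = W.length - (c + 1) := by
      omega
    have e2 : j + (c : ZMod W.length) + ((W.length - (c + 1) : ℕ) : ZMod W.length) = j - 1 := by
      rw [Nat.cast_sub (by omega)]
      push_cast [ZMod.natCast_self]
      ring
    rw [e1, e2]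
    simpa using hx2
  · -- length
    rw [hlenU]; omega
  · -- conjugacy
    set D := (List.ofFn fun t : Fin c => letterZ W (j + ((t : ℕ) : ZMod W.length))) with hD
    have hWrot : rotZ W j = D ++ B := by
      rw [rotZ_eq_ofFn]
      apply List.ext_getElem
      · simp [hD, hB]; omega
      · intro s hs1 hs2
        rw [List.getElem_ofFn, List.getElem_append]
        split_ifs with h
        · simp only [hD, List.getElem_ofFn]
        · simp only [hD, List.length_ofFn] at h ⊢
          simp only [hB, List.getElem_ofFn]
          congr 1
          rw [Nat.cast_sub (by omega)]
          ring
    have hVrot : rotZ V i = A ++ FreeGroup.invRev D := by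
      rw [rotZ_eq_ofFn]
      apply List.ext_getElem
      · simp [hA, hD, FreeGroup.invRev]; omega
      · intro s hs1 hs2
        simp only [List.length_ofFn] at hs1
        rw [List.getElem_ofFn, List.getElem_append]
        split_ifs with h
        · simp only [hA, List.getElem_ofFn]
        · simp only [hlA] at h
          have hp : s - (V.length - c) < c := by omega
          show letterZ V (i + ((s : ℕ) : ZMod V.length)) = (FreeGroup.invRev D)[s - A.length]'_
          simp only [FreeGroup.invRev, List.getElem_reverse, List.getElem_map, hD,
            List.getElem_ofFn, List.length_map, List.length_ofFn, hlA]
          have hnegt := hneg (c - 1 - (s - (V.length - c))) (by omega)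
          show letterZ V (i + ((s : ℕ) : ZMod V.length)) =
            pbar (letterZ W (j + ((c - 1 - (s - (V.length - c)) : ℕ) : ZMod W.length)))
          rw [← hnegt]
          congr 1
          set p := s - (V.length - c) with hpdef
          rw [show c - 1 - p = c - (p + 1) from by omega, Nat.cast_sub (by omega),
            show s = V.length - (c - p) from by omega, Nat.cast_sub (by omega),
            Nat.cast_sub (by omega)]
          push_cast [ZMod.natCast_self]
          ring
    have h0 : FreeGroup.mk (FreeGroup.invRev D) * FreeGroup.mk D = 1 := by
      rw [← FreeGroup.inv_mk, inv_mul_cancel]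
    have key : FreeGroup.mk (rotZ V i ++ rotZ W j) = FreeGroup.mk (A ++ B) := by
      rw [hVrot, hWrot]
      simp only [← FreeGroup.mul_mk]
      rw [mul_assoc, ← mul_assoc (FreeGroup.mk (FreeGroup.invRev D)), h0, one_mul]
    rw [key]

end GoldmanPaper
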